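/- Let ω ∈ ℝⁿ satisfy |k·ω| > 0 for all nonzero k ∈ ℤⁿ with |k|₁ ≤ 2r, and let f(p,q) = Σ_{m=1}^n Σ_{0<|k|₁≤2r} c_{m,k} p_m e^{i k·q} be linear in p with zero angular average. Then χ₂(p,q) = Σ_{m,k} −c_{m,k} p_m e^{i k·q}/(i k·ω) solves {χ₂, ω·p} + f = 0, and the partial derivatives satisfy max_m ‖∂χ₂/∂p_m‖ ≤ ‖f‖ / min_{0<|k|₁≤2r}|k·ω| and max_m ‖∂χ₂/∂q_m‖ ≤ 2r ‖f‖ / min_{0<|k|₁≤2r}|k·ω|. -/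

import Mathlib

/- Taylor–Fourier polynomials: finitely supported real coefficients indexed by
   (power of p, Fourier harmonic k, cos/sin). -/
abbrev TFIdx (n : ℕ) := (Fin n →₀ ℕ) × (Fin n →₀ ℤ) × Bool
abbrev TF (n : ℕ) := TFIdx n →₀ ℝ

noncomputable def tfNorm {n : ℕ} (g : TF n) : ℝ := g.sum fun _ a => |a|

/-- Formal partial derivative ∂/∂q_i on coefficients. -/
noncomputable def tfDq {n : ℕ} (i : Fin n) (g : TF n) : TF n :=
  g.sum fun m a =>
    if m.2.2 then Finsupp.single (m.1, m.2.1, false) (-(a * (m.2.1 i : ℝ)))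
    else Finsupp.single (m.1, m.2.1, true) (a * (m.2.1 i : ℝ))

/-- Formal partial derivative ∂/∂p_i on coefficients. -/
noncomputable def tfDp {n : ℕ} (i : Fin n) (g : TF n) : TF n :=
  g.sum fun m a =>
    Finsupp.single (m.1 - Finsupp.single i 1, m.2.1, m.2.2) (a * (m.1 i : ℝ))

/-- Degree in the actions p. -/
def pdeg {n : ℕ} (m : TFIdx n) : ℕ := m.1.sum fun _ e => e

/-! The operator `Σ_i ω_i ∂/∂q_i` maps the coefficient of `cos(k·q)` to that of `sin(k·q)` and back,
multiplied by `∓ k·ω`. Hence `χ₂` is obtained from `f` by exchanging the two trigonometric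
functions of each harmonic and dividing by `± k·ω`, which multiplies the ℓ¹-norm by at most `1/α`.
On a polynomial linear in `p` with harmonics `|k|₁ ≤ 2r`, `∂/∂p_m` multiplies each coefficient by an
exponent `≤ 1` and `∂/∂q_m` by `|k_m| ≤ 2r`. -/

section

variable {n : ℕ}

/-- Exchanges `cos(k·q)` (flag `true`) and `sin(k·q)` (flag `false`). -/
def tfSwap (m : TFIdx n) : TFIdx n := (m.1, m.2.1, !m.2.2)

noncomputable def tfSign (m : TFIdx n) : ℝ := if m.2.2 then 1 else -1

def harmonicFreq (ω : Fin n → ℝ) (k : Fin n →₀ ℤ) : ℝ := ∑ i, (k i : ℝ) * ω i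

noncomputable def tfReindex (φ : TFIdx n → TFIdx n) (c : TFIdx n → ℝ) (g : TF n) : TF n :=
  g.sum fun m a => Finsupp.single (φ m) (a * c m)

@[simp]
lemma tfSwap_snd_fst (m : TFIdx n) : (tfSwap m).2.1 = m.2.1 :=
  rfl

lemma tfSwap_involutive : Function.Involutive (tfSwap (n := n)) := fun m => by
  simp [tfSwap]

@[simp]
lemma tfSign_tfSwap (m : TFIdx n) : tfSign (tfSwap m) = -tfSign m := by
  rcases m with ⟨ν, k, _ | _⟩ <;> simp [tfSign, tfSwap]

lemma abs_tfSign (m : TFIdx n) : |tfSign m| = 1 := by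
  rw [tfSign]; split_ifs <;> simp

lemma tfSign_mul_self (m : TFIdx n) : tfSign m * tfSign m = 1 := by
  rw [tfSign]; split_ifs <;> norm_num

@[simp]
lemma tfNorm_zero : tfNorm (0 : TF n) = 0 := by
  simp [tfNorm]

@[simp]
lemma tfNorm_single (m : TFIdx n) (a : ℝ) : tfNorm (Finsupp.single m a) = |a| :=
  Finsupp.sum_single_index abs_zero

lemma tfNorm_add_le (x y : TF n) : tfNorm (x + y) ≤ tfNorm x + tfNorm y := by
  classical
  have hsum : ∀ g : TF n, g.support ⊆ x.support ∪ y.support →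
      tfNorm g = ∑ a ∈ x.support ∪ y.support, |g a| :=
    fun g hg => Finsupp.sum_of_support_subset g hg _ fun _ _ => abs_zero
  rw [hsum _ Finsupp.support_add, hsum x Finset.subset_union_left,
    hsum y Finset.subset_union_right, ← Finset.sum_add_distrib]
  exact Finset.sum_le_sum fun a _ => abs_add_le (x a) (y a)

lemma tfNorm_sum_le {ι : Type*} (s : Finset ι) (g : ι → TF n) :
    tfNorm (∑ b ∈ s, g b) ≤ ∑ b ∈ s, tfNorm (g b) :=
  Finset.le_sum_of_subadditive _ tfNorm_zero.le tfNorm_add_le s g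

lemma tfNorm_tfReindex_le {φ : TFIdx n → TFIdx n} {c : TFIdx n → ℝ} {g : TF n} {C : ℝ}
    (hc : ∀ m ∈ g.support, |c m| ≤ C) : tfNorm (tfReindex φ c g) ≤ C * tfNorm g :=
  calc tfNorm (tfReindex φ c g)
      ≤ ∑ m ∈ g.support, tfNorm (Finsupp.single (φ m) (g m * c m)) := tfNorm_sum_le _ _
    _ = ∑ m ∈ g.support, |g m| * |c m| := by simp only [tfNorm_single, abs_mul]
    _ ≤ ∑ m ∈ g.support, C * |g m| := Finset.sum_le_sum fun m hm => by
      rw [mul_comm]; exact mul_le_mul_of_nonneg_right (hc m hm) (abs_nonneg _)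
    _ = C * tfNorm g := (Finset.mul_sum _ _ _).symm

lemma support_tfReindex_subset (φ : TFIdx n → TFIdx n) (c : TFIdx n → ℝ) (g : TF n) :
    (tfReindex φ c g).support ⊆ g.support.image φ := by
  classical
  intro x hx
  obtain ⟨m, hm, hx⟩ := Finset.mem_biUnion.mp (Finsupp.support_sum hx)
  exact Finset.mem_image.mpr
    ⟨m, hm, (Finset.mem_singleton.mp (Finsupp.support_single_subset hx)).symm⟩

lemma tfReindex_apply_of_involutive {φ : TFIdx n → TFIdx n} (hφ : Function.Involutive φ)
    (c : TFIdx n → ℝ) (g : TF n) (x : TFIdx n) : tfReindex φ c g x = g (φ x) * c (φ x) := by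
  classical
  simp only [tfReindex, Finsupp.sum_apply, Finsupp.single_apply, hφ.eq_iff,
    Finsupp.sum_ite_eq', Finsupp.mem_support_iff]
  split_ifs with h
  · rfl
  · simp only [not_not] at h; simp [h]

lemma tfDp_eq_tfReindex (i : Fin n) (g : TF n) :
    tfDp i g = tfReindex (fun m => (m.1 - Finsupp.single i 1, m.2.1, m.2.2))
      (fun m => (m.1 i : ℝ)) g :=
  rfl

lemma tfDq_eq_tfReindex (i : Fin n) (g : TF n) :
    tfDq i g = tfReindex tfSwap (fun m => -tfSign m * (m.2.1 i : ℝ)) g :=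
  Finsupp.sum_congr fun m _ => by rcases m with ⟨ν, k, _ | _⟩ <;> simp [tfSign, tfSwap]

lemma tfDq_apply (i : Fin n) (g : TF n) (x : TFIdx n) :
    tfDq i g x = tfSign x * g (tfSwap x) * (x.2.1 i : ℝ) := by
  rw [tfDq_eq_tfReindex, tfReindex_apply_of_involutive tfSwap_involutive]
  simp only [tfSign_tfSwap, neg_neg, tfSwap_snd_fst]
  ring

lemma tfNorm_tfDp_le (i : Fin n) {g : TF n} {d : ℕ} (hg : ∀ m ∈ g.support, pdeg m ≤ d) :
    tfNorm (tfDp i g) ≤ d * tfNorm g := by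
  rw [tfDp_eq_tfReindex]
  refine tfNorm_tfReindex_le fun m hm => ?_
  rw [Nat.abs_cast, Nat.cast_le]
  exact (Finsupp.single_eval_le_sum m.1 (g := id) rfl (fun _ => Nat.zero_le _) i).trans (hg m hm)

lemma tfNorm_tfDq_le (i : Fin n) {g : TF n} {K : ℕ}
    (hg : ∀ m ∈ g.support, (m.2.1.sum fun _ c => c.natAbs) ≤ K) :
    tfNorm (tfDq i g) ≤ K * tfNorm g := by
  rw [tfDq_eq_tfReindex]
  refine tfNorm_tfReindex_le fun m hm => ?_
  rw [abs_mul, abs_neg, abs_tfSign, one_mul, ← Int.cast_abs, ← Int.natCast_natAbs, Int.cast_natCast,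
    Nat.cast_le]
  exact (Finsupp.single_eval_le_sum m.2.1 Int.natAbs_zero (fun _ => Nat.zero_le _) i).trans
    (hg m hm)

noncomputable def homologicalSolution (ω : Fin n → ℝ) (f : TF n) : TF n :=
  tfReindex tfSwap (fun m => -tfSign m / harmonicFreq ω m.2.1) f

lemma homologicalSolution_apply (ω : Fin n → ℝ) (f : TF n) (x : TFIdx n) :
    homologicalSolution ω f x = tfSign x * f (tfSwap x) / harmonicFreq ω x.2.1 := by
  rw [homologicalSolution, tfReindex_apply_of_involutive tfSwap_involutive]
  simp only [tfSign_tfSwap, neg_neg, tfSwap_snd_fst]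
  ring

lemma tfSwap_mem_support_of_mem_support_homologicalSolution {ω : Fin n → ℝ} {f : TF n}
    {m : TFIdx n} (hm : m ∈ (homologicalSolution ω f).support) : tfSwap m ∈ f.support := by
  obtain ⟨m', hm', rfl⟩ := Finset.mem_image.mp (support_tfReindex_subset _ _ _ hm)
  rwa [tfSwap_involutive]

lemma sum_smul_tfDq_homologicalSolution {ω : Fin n → ℝ} {f : TF n}
    (hf : ∀ m ∈ f.support, harmonicFreq ω m.2.1 ≠ 0) :
    ∑ i, ω i • tfDq i (homologicalSolution ω f) = -f := by
  ext x
  simp only [Finsupp.finsetSum_apply, Finsupp.smul_apply, smul_eq_mul, tfDq_apply,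
    homologicalSolution_apply, tfSwap_involutive x, tfSign_tfSwap, tfSwap_snd_fst, Finsupp.coe_neg, Pi.neg_apply]
  by_cases hx : x ∈ f.support
  · have hfreq : harmonicFreq ω x.2.1 ≠ 0 := hf x hx
    calc ∑ i, ω i * (tfSign x * (-tfSign x * f x / harmonicFreq ω x.2.1) * x.2.1 i)
        = -(tfSign x * tfSign x) * f x / harmonicFreq ω x.2.1 * harmonicFreq ω x.2.1 := by
          rw [harmonicFreq, Finset.mul_sum]
          exact Finset.sum_congr rfl fun i _ => by ring
      _ = -f x := by rw [tfSign_mul_self, div_mul_cancel₀ _ hfreq]; ring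
  · simp [Finsupp.notMem_support_iff.mp hx]

lemma tfNorm_homologicalSolution_le {ω : Fin n → ℝ} {f : TF n} {α : ℝ} (hα : 0 < α)
    (hf : ∀ m ∈ f.support, α ≤ |harmonicFreq ω m.2.1|) :
    tfNorm (homologicalSolution ω f) ≤ tfNorm f / α := by
  rw [div_eq_inv_mul]
  refine tfNorm_tfReindex_le fun m hm => ?_
  rw [abs_div, abs_neg, abs_tfSign, one_div]
  exact inv_anti₀ hα (hf m hm)

end

/-- if |k·ω| ≥ α > 0 for all nonzero k with |k|₁ ≤ 2r, and f is linear in p,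
with zero angular average and trigonometric degree ≤ 2r, then the homological equation
{χ₂, ω·p} + f = 0, i.e. Σ_i ω_i ∂χ₂/∂q_i = −f, has a solution χ₂ linear in p, zero-mean, of
trigonometric degree ≤ 2r, with max_m ‖∂χ₂/∂p_m‖ ≤ ‖f‖/α and max_m ‖∂χ₂/∂q_m‖ ≤ 2r‖f‖/α. -/
theorem homological_equation_linear_in_actions {n : ℕ} (r : ℕ) (ω : Fin n → ℝ) (f : TF n)
    (α : ℝ) (hα : 0 < α)
    (hdiv : ∀ k : Fin n →₀ ℤ, k ≠ 0 → (k.sum fun _ c => c.natAbs) ≤ 2 * r →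
      α ≤ |∑ i, (k i : ℝ) * ω i|)
    (hf_p : ∀ m ∈ f.support, pdeg m = 1)
    (hf_mean : ∀ m ∈ f.support, m.2.1 ≠ 0)
    (hf_trig : ∀ m ∈ f.support, (m.2.1.sum fun _ c => c.natAbs) ≤ 2 * r) :
    ∃ χ₂ : TF n,
      (∀ m ∈ χ₂.support, pdeg m = 1) ∧ (∀ m ∈ χ₂.support, m.2.1 ≠ 0) ∧
      (∀ m ∈ χ₂.support, (m.2.1.sum fun _ c => c.natAbs) ≤ 2 * r) ∧
      (∑ i, ω i • tfDq i χ₂) = -f ∧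
      (∀ m : Fin n, tfNorm (tfDp m χ₂) ≤ tfNorm f / α) ∧
      (∀ m : Fin n, tfNorm (tfDq m χ₂) ≤ 2 * r * tfNorm f / α) := by
  set χ₂ := homologicalSolution ω f
  have hfreq : ∀ m ∈ f.support, α ≤ |harmonicFreq ω m.2.1| :=
    fun m hm => hdiv _ (hf_mean m hm) (hf_trig m hm)
  have hswap : ∀ m ∈ χ₂.support, tfSwap m ∈ f.support :=
    fun m hm => tfSwap_mem_support_of_mem_support_homologicalSolution hm
  have hχ_p : ∀ m ∈ χ₂.support, pdeg m = 1 := fun m hm => hf_p (tfSwap m) (hswap m hm)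
  have hχ_trig : ∀ m ∈ χ₂.support, (m.2.1.sum fun _ c => c.natAbs) ≤ 2 * r :=
    fun m hm => hf_trig (tfSwap m) (hswap m hm)
  have hnorm : tfNorm χ₂ ≤ tfNorm f / α := tfNorm_homologicalSolution_le hα hfreq
  refine ⟨χ₂, hχ_p, fun m hm => hf_mean (tfSwap m) (hswap m hm), hχ_trig,
    sum_smul_tfDq_homologicalSolution fun m hm => abs_pos.mp (hα.trans_le (hfreq m hm)),
    fun i => ?_, fun i => ?_⟩
  · calc tfNorm (tfDp i χ₂) ≤ (1 : ℕ) * tfNorm χ₂ := tfNorm_tfDp_le i fun m hm => (hχ_p m hm).le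
      _ ≤ tfNorm f / α := by rwa [Nat.cast_one, one_mul]
  · calc tfNorm (tfDq i χ₂) ≤ (2 * r : ℕ) * tfNorm χ₂ := tfNorm_tfDq_le i hχ_trig
      _ ≤ 2 * r * (tfNorm f / α) := by push_cast; gcongr
      _ = 2 * r * tfNorm f / α := (mul_div_assoc _ _ _).symm
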